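/- Let 𝔤 be a nonabelian nilpotent Lie algebra with dim 𝔤' ≥ 2 and codim 𝔤' ≤ 2, such that dim Span(X₁,X₂,X₃,[X₁,X₂],[X₁,X₃],[X₂,X₃]) ≤ 4 for all triples. Then 𝔤 is isomorphic to the four-dimensional filiform Lie algebra with basis W, X, Y, Z and nonzero brackets [W,X]=Y, [W,Y]=Z. -/

import Mathlib

/-!
Write `C k` for the lower central series. If `L = span S + C 1` and `C k = span T + C (k + 1)`,
then `C (k + 1) = span ⁅S, T⁆ + C (k + 2)`, because `⁅C 1, C k⁆ ⊆ C (k + 2)` by the Jacobi identity;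
and since `L` is nilpotent, `C k ⊆ C (k + 1)` forces `C k = 0`.

By the codimension bound, `L = span {x, y} + C 1`. Then `x, y` are independent modulo `C 1` and
`⁅x, y⁆ ∉ C 2`, for otherwise `L` would be abelian. Applied to `x, y, ⁅x, y⁆`, the bound on the
spans of triples makes `⁅x, ⁅x, y⁆⁆` and `⁅y, ⁅x, y⁆⁆` dependent, so after a change of generators
`⁅y, ⁅x, y⁆⁆ = 0` and `C 2 = span ⁅x, ⁅x, y⁆⁆ + C 3`, where `⁅x, ⁅x, y⁆⁆ ∉ C 3` as `dim C 1 ≥ 2`.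
Applied to `x, y, ⁅x, ⁅x, y⁆⁆`, the same bound kills `⁅x, ⁅x, ⁅x, y⁆⁆⁆` and `⁅y, ⁅x, ⁅x, y⁆⁆⁆`.
Hence `C 3 = 0`, and `x, y, ⁅x, y⁆, ⁅x, ⁅x, y⁆⁆` is the required basis.
-/

open Module Submodule LieModule Matrix

section LinearAlgebra

variable {K V : Type*} [Field K] [AddCommGroup V] [Module K V]

lemma exists_top_le_span_pair_sup [FiniteDimensional K V] {N : Submodule K V}
    (h : finrank K V ≤ finrank K N + 2) : ∃ x y : V, ⊤ ≤ span K {x, y} ⊔ N := by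
  classical
  obtain ⟨W, hW⟩ := N.exists_isCompl
  have hW2 : finrank K W ≤ 2 := by
    have := Submodule.finrank_add_eq_of_isCompl hW
    omega
  obtain ⟨t, -, ht, hspan, -⟩ := exists_finset_span_eq_linearIndepOn K (W : Set V)
  rw [span_eq] at ht hspan
  obtain ⟨x, y, hxy⟩ : ∃ x y, t ⊆ {x, y} := by
    rcases Nat.lt_or_ge t.card 2 with ht₂ | ht₂
    · obtain ⟨x, hx⟩ := (Finset.card_le_one_iff_subset_singleton (s := t)).1 (by omega)
      exact ⟨x, x, by simpa using hx⟩
    · obtain ⟨x, y, -, rfl⟩ := (Finset.card_eq_two (s := t)).1 (by omega)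
      exact ⟨x, y, subset_rfl⟩
  refine ⟨x, y, ?_⟩
  rw [← hW.sup_eq_top, sup_comm, ← hspan]
  exact sup_le_sup_right (span_mono (by rw [← Finset.coe_pair]; exact_mod_cast hxy)) N

lemma linearIndependent_vecCons {n : ℕ} {N : Submodule K V} {x : V} {v : Fin n → V}
    (hv : LinearIndependent K v) (hvN : ∀ i, v i ∈ N) (hx : x ∉ N) :
    LinearIndependent K (vecCons x v) :=
  linearIndependent_finCons.2 ⟨hv, fun h => hx (span_le.2 (Set.range_subset_iff.2 hvN) h)⟩

lemma linearIndependent_vecCons_three {N₁ N₂ : Submodule K V} (h₂₁ : N₂ ≤ N₁) {x y u : V}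
    (hx : x ∉ span K {y} ⊔ N₁) (hy : y ∉ N₁) (hu₁ : u ∈ N₁) (hu₂ : u ∉ N₂)
    {n : ℕ} {w : Fin n → V} (hw : LinearIndependent K w) (hwN : ∀ i, w i ∈ N₂) :
    LinearIndependent K (vecCons x (vecCons y (vecCons u w))) := by
  have hu := linearIndependent_vecCons hw hwN hu₂
  have huN : ∀ i, vecCons u w i ∈ N₁ := Fin.forall_fin_succ.2 ⟨hu₁, fun i => h₂₁ (hwN i)⟩
  have hy := linearIndependent_vecCons hu huN hy
  exact linearIndependent_vecCons hy (Fin.forall_fin_succ.2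
    ⟨mem_sup_left (mem_span_singleton_self y), fun i => mem_sup_right (huN i)⟩) hx

lemma LinearIndependent.card_le_finrank_span [FiniteDimensional K V] {ι : Type*} [Fintype ι]
    {v : ι → V} (hv : LinearIndependent K v) {s : Set V} (hs : Set.range v ⊆ s) :
    Fintype.card ι ≤ finrank K (span K s) :=
  (linearIndependent_iff_card_le_finrank_span.1 hv).trans (finrank_mono (span_mono hs))

end LinearAlgebra

section LowerCentralSeries

variable {R L : Type*} [CommRing R] [LieRing L] [LieAlgebra R L]

local notation "𝒞" k:max => LieSubmodule.toSubmodule (lowerCentralSeries R L L k)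

lemma lie_mem_lowerCentralSeries_succ (x : L) {m : L} {k : ℕ}
    (hm : m ∈ lowerCentralSeries R L L k) : ⁅x, m⁆ ∈ lowerCentralSeries R L L (k + 1) := by
  rw [LieModule.lowerCentralSeries_succ]
  exact LieSubmodule.lie_mem_lie (LieSubmodule.mem_top x) hm

lemma lie_mem_lowerCentralSeries_one (x y : L) : ⁅x, y⁆ ∈ lowerCentralSeries R L L 1 :=
  lie_mem_lowerCentralSeries_succ x (by simp)

lemma lie_mem_lowerCentralSeries_add_two {d w : L} {k : ℕ}
    (hd : d ∈ lowerCentralSeries R L L 1) (hw : w ∈ lowerCentralSeries R L L k) :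
    ⁅d, w⁆ ∈ lowerCentralSeries R L L (k + 2) := by
  rw [← LieSubmodule.mem_toSubmodule, LieModule.lowerCentralSeries_succ,
    LieSubmodule.lieIdeal_oper_eq_linear_span'] at hd
  induction hd using span_induction with
  | mem _ h =>
    obtain ⟨a, -, b, -, rfl⟩ := h
    rw [lie_lie]
    exact sub_mem (lie_mem_lowerCentralSeries_succ a (lie_mem_lowerCentralSeries_succ b hw))
      (lie_mem_lowerCentralSeries_succ b (lie_mem_lowerCentralSeries_succ a hw))
  | zero => simp
  | add _ _ _ _ h₁ h₂ => rw [add_lie]; exact add_mem h₁ h₂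
  | smul c _ _ h => rw [smul_lie]; exact SMulMemClass.smul_mem c h

lemma lowerCentralSeries_succ_le_span_image2_lie_sup {S T : Set L} {k : ℕ}
    (hS : ⊤ ≤ span R S ⊔ 𝒞 1) (hT : 𝒞 k ≤ span R T ⊔ 𝒞 (k + 1)) :
    𝒞 (k + 1) ≤ span R (Set.image2 (⁅·, ·⁆) S T) ⊔ 𝒞 (k + 2) := by
  rw [LieModule.lowerCentralSeries_succ, LieSubmodule.lieIdeal_oper_eq_linear_span', span_le]
  rintro _ ⟨a, -, w, hw, rfl⟩
  obtain ⟨s, hs, d, hd, rfl⟩ := mem_sup.1 (hS (mem_top (x := a)))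
  obtain ⟨t, ht, e, he, rfl⟩ := mem_sup.1 (hT hw)
  have hst : ⁅s, t⁆ ∈ span R (Set.image2 (⁅·, ·⁆) S T) := by
    have := apply_mem_map₂ (LinearMap.mk₂ R (⁅·, ·⁆) add_lie smul_lie lie_add lie_smul) hs ht
    rwa [map₂_span_span] at this
  rw [add_lie, lie_add]
  exact add_mem (add_mem (mem_sup_left hst)
    (mem_sup_right (lie_mem_lowerCentralSeries_succ s he)))
    (mem_sup_right (lie_mem_lowerCentralSeries_add_two hd hw))

lemma lowerCentralSeries_eq_bot_of_le_succ [LieRing.IsNilpotent L] {k : ℕ}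
    (h : 𝒞 k ≤ 𝒞 (k + 1)) : lowerCentralSeries R L L k = ⊥ := by
  have hle : ∀ m, lowerCentralSeries R L L k ≤ lowerCentralSeries R L L (k + m) := by
    intro m
    induction m with
    | zero => rfl
    | succ m ih =>
      calc lowerCentralSeries R L L k ≤ lowerCentralSeries R L L (k + 1) := h
        _ ≤ lowerCentralSeries R L L (k + m + 1) := by
          rw [LieModule.lowerCentralSeries_succ, LieModule.lowerCentralSeries_succ]
          exact LieSubmodule.mono_lie_right _ ih
  obtain ⟨n, hn⟩ := IsNilpotent.nilpotent R L L
  exact eq_bot_iff.2 ((hle n).trans (hn ▸ antitone_lowerCentralSeries R L L (Nat.le_add_left n k)))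

lemma lowerCentralSeries_one_le_span_lie_sup {x y : L} (hxy : ⊤ ≤ span R {x, y} ⊔ 𝒞 1) :
    𝒞 1 ≤ span R {⁅x, y⁆} ⊔ 𝒞 2 := by
  refine (lowerCentralSeries_succ_le_span_image2_lie_sup hxy (k := 0) (by simpa using hxy)).trans
    (sup_le_sup_right (span_le.2 ?_) _)
  rintro _ ⟨a, ha, b, hb, rfl⟩
  rcases ha with rfl | rfl <;> rcases hb with rfl | rfl
  · simp
  · exact mem_span_singleton_self _
  · simp only [SetLike.mem_coe]
    rw [← neg_mem_iff, lie_skew]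
    exact mem_span_singleton_self _
  · simp

lemma lowerCentralSeries_two_le_span_lie_lie_sup {x y : L} (hxy : ⊤ ≤ span R {x, y} ⊔ 𝒞 1)
    (hyu : ⁅y, ⁅x, y⁆⁆ = 0) : 𝒞 2 ≤ span R {⁅x, ⁅x, y⁆⁆} ⊔ 𝒞 3 := by
  refine (lowerCentralSeries_succ_le_span_image2_lie_sup hxy
    (lowerCentralSeries_one_le_span_lie_sup hxy)).trans (sup_le_sup_right (span_le.2 ?_) _)
  rintro _ ⟨a, ha, b, rfl, rfl⟩
  rcases ha with rfl | rfl <;> simp [mem_span_singleton_self, hyu]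

lemma lowerCentralSeries_three_eq_bot [LieRing.IsNilpotent L] {x y : L}
    (hxy : ⊤ ≤ span R {x, y} ⊔ 𝒞 1) (hyu : ⁅y, ⁅x, y⁆⁆ = 0)
    (hxv : ⁅x, ⁅x, ⁅x, y⁆⁆⁆ = 0) (hyv : ⁅y, ⁅x, ⁅x, y⁆⁆⁆ = 0) :
    lowerCentralSeries R L L 3 = ⊥ := by
  refine lowerCentralSeries_eq_bot_of_le_succ ((lowerCentralSeries_succ_le_span_image2_lie_sup
    hxy (lowerCentralSeries_two_le_span_lie_lie_sup hxy hyu)).trans (sup_le ?_ le_rfl))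
  rw [span_le]
  rintro _ ⟨a, ha, b, rfl, rfl⟩
  rcases ha with rfl | rfl <;> simp [hxv, hyv]

lemma top_le_span_range_of_lowerCentralSeries_three_eq_bot {x y : L}
    (hxy : ⊤ ≤ span R {x, y} ⊔ 𝒞 1) (hyu : ⁅y, ⁅x, y⁆⁆ = 0) (h₃ : lowerCentralSeries R L L 3 = ⊥) :
    ⊤ ≤ span R (Set.range ![x, y, ⁅x, y⁆, ⁅x, ⁅x, y⁆⁆]) := by
  calc ⊤ ≤ span R {x, y} ⊔ 𝒞 1 := hxy
    _ ≤ span R {x, y} ⊔ (span R {⁅x, y⁆} ⊔ (span R {⁅x, ⁅x, y⁆⁆} ⊔ 𝒞 3)) :=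
      sup_le_sup_left ((lowerCentralSeries_one_le_span_lie_sup hxy).trans
        (sup_le_sup_left (lowerCentralSeries_two_le_span_lie_lie_sup hxy hyu) _)) _
    _ ≤ span R (Set.range ![x, y, ⁅x, y⁆, ⁅x, ⁅x, y⁆⁆]) := by
      rw [h₃, LieSubmodule.bot_toSubmodule, sup_bot_eq, ← span_union, ← span_union]
      exact span_mono (by simp [Set.insert_subset_iff])

lemma lowerCentralSeries_one_eq_bot_of_top_le_span_singleton_sup [LieRing.IsNilpotent L] {z : L}
    (hz : ⊤ ≤ span R {z} ⊔ 𝒞 1) : lowerCentralSeries R L L 1 = ⊥ := by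
  have h := lowerCentralSeries_one_le_span_lie_sup (x := z) (y := z) (by simpa using hz)
  rw [lie_self, span_singleton_eq_bot.2 rfl, bot_sup_eq] at h
  exact lowerCentralSeries_eq_bot_of_le_succ h

lemma notMem_span_singleton_sup_of_top_le_span_pair_sup [LieRing.IsNilpotent L] {x y : L}
    (hxy : ⊤ ≤ span R {x, y} ⊔ 𝒞 1) (h₁ : lowerCentralSeries R L L 1 ≠ ⊥) :
    x ∉ span R {y} ⊔ 𝒞 1 := fun hx =>
  h₁ <| lowerCentralSeries_one_eq_bot_of_top_le_span_singleton_sup <| hxy.trans <|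
    sup_le (span_le.2 (Set.insert_subset hx (by simp [mem_sup_left, mem_span_singleton_self])))
      le_sup_right

lemma lie_notMem_lowerCentralSeries_two [LieRing.IsNilpotent L] {x y : L}
    (hxy : ⊤ ≤ span R {x, y} ⊔ 𝒞 1) (h₁ : lowerCentralSeries R L L 1 ≠ ⊥) :
    ⁅x, y⁆ ∉ 𝒞 2 := fun hu =>
  h₁ <| lowerCentralSeries_eq_bot_of_le_succ <| (lowerCentralSeries_one_le_span_lie_sup hxy).trans
    (sup_le (span_le.2 (Set.singleton_subset_iff.2 hu)) le_rfl)

end LowerCentralSeries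

/-- The new generators are `γ • x + δ • y` and `α • x + β • y`, with `γ, δ` making the change of
generators invertible; it multiplies `⁅x, y⁆` by its determinant `γ * β - δ * α`. -/
lemma exists_subset_span_pair_lie_lie_eq_zero {K L : Type*} [Field K] [LieRing L]
    [LieAlgebra K L] {x y : L} {α β : K} (hαβ : α ≠ 0 ∨ β ≠ 0)
    (h : α • ⁅x, ⁅x, y⁆⁆ + β • ⁅y, ⁅x, y⁆⁆ = 0) :
    ∃ x' y' : L, {x, y} ⊆ (span K {x', y'} : Set L) ∧ ⁅y', ⁅x', y'⁆⁆ = 0 := by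
  obtain ⟨γ, δ, hD⟩ : ∃ γ δ : K, γ * β - δ * α ≠ 0 := by
    rcases hαβ with hα | hβ
    · exact ⟨0, -1, by simpa⟩
    · exact ⟨1, 0, by simpa⟩
  have hbr : ⁅γ • x + δ • y, α • x + β • y⁆ = (γ * β - δ * α) • ⁅x, y⁆ := by
    simp only [add_lie, lie_add, smul_lie, lie_smul, lie_self, ← lie_skew y x]
    module
  refine ⟨γ • x + δ • y, α • x + β • y, Set.insert_subset_iff.2 ⟨?_, ?_⟩, ?_⟩
  · refine mem_span_pair.2 ⟨(γ * β - δ * α)⁻¹ * β, -((γ * β - δ * α)⁻¹ * δ), ?_⟩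
    match_scalars <;> field_simp <;> ring
  · refine Set.singleton_subset_iff.2 (mem_span_pair.2
      ⟨-((γ * β - δ * α)⁻¹ * α), (γ * β - δ * α)⁻¹ * γ, ?_⟩)
    match_scalars <;> field_simp <;> ring
  · rw [hbr, lie_smul, add_lie, smul_lie, smul_lie, h, smul_zero]

section FiniteDimensional

variable {K L : Type*} [Field K] [LieRing L] [LieAlgebra K L] [LieRing.IsNilpotent L]

local notation "𝒞" k:max => LieSubmodule.toSubmodule (lowerCentralSeries K L L k)

lemma linearIndependent_vecCons_lie {x y : L} (hxy : ⊤ ≤ span K {x, y} ⊔ 𝒞 1)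
    (h₁ : lowerCentralSeries K L L 1 ≠ ⊥) {n : ℕ} {w : Fin n → L} (hw : LinearIndependent K w)
    (hw₂ : ∀ i, w i ∈ lowerCentralSeries K L L 2) :
    LinearIndependent K (vecCons x (vecCons y (vecCons ⁅x, y⁆ w))) :=
  linearIndependent_vecCons_three (antitone_lowerCentralSeries K L L one_le_two)
    (notMem_span_singleton_sup_of_top_le_span_pair_sup hxy h₁)
    (fun hy => notMem_span_singleton_sup_of_top_le_span_pair_sup (Set.pair_comm x y ▸ hxy) h₁
      (mem_sup_right hy))
    (lie_mem_lowerCentralSeries_one x y)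
    (lie_notMem_lowerCentralSeries_two hxy h₁) hw hw₂

lemma lie_lie_notMem_lowerCentralSeries_three {x y : L} (hxy : ⊤ ≤ span K {x, y} ⊔ 𝒞 1)
    (hyu : ⁅y, ⁅x, y⁆⁆ = 0) (hder : 2 ≤ finrank K (𝒞 1)) : ⁅x, ⁅x, y⁆⁆ ∉ 𝒞 3 := by
  intro hv
  have h₂ : lowerCentralSeries K L L 2 = ⊥ := lowerCentralSeries_eq_bot_of_le_succ <|
    (lowerCentralSeries_two_le_span_lie_lie_sup hxy hyu).trans
      (sup_le (span_le.2 (Set.singleton_subset_iff.2 hv)) le_rfl)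
  have h₁ := lowerCentralSeries_one_le_span_lie_sup hxy
  rw [h₂, LieSubmodule.bot_toSubmodule, sup_bot_eq] at h₁
  have := (finrank_mono h₁).trans (finrank_span_le_card ({⁅x, y⁆} : Set L))
  simp only [Set.toFinset_singleton, Finset.card_singleton] at this
  omega

variable [FiniteDimensional K L]

lemma exists_top_le_span_pair_sup_lie_lie_eq_zero {x y : L} (hxy : ⊤ ≤ span K {x, y} ⊔ 𝒞 1)
    (h₁ : lowerCentralSeries K L L 1 ≠ ⊥)
    (hdim : ∀ X₁ X₂ X₃ : L, finrank K (span K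
      ({X₁, X₂, X₃, ⁅X₁, X₂⁆, ⁅X₁, X₃⁆, ⁅X₂, X₃⁆} : Set L)) ≤ 4) :
    ∃ x' y' : L, ⊤ ≤ span K {x', y'} ⊔ 𝒞 1 ∧ ⁅y', ⁅x', y'⁆⁆ = 0 := by
  obtain ⟨α, β, hdep, hαβ⟩ :
      ∃ α β : K, α • ⁅x, ⁅x, y⁆⁆ + β • ⁅y, ⁅x, y⁆⁆ = 0 ∧ (α ≠ 0 ∨ β ≠ 0) := by
    by_contra! h
    have hw : LinearIndependent K ![⁅x, ⁅x, y⁆⁆, ⁅y, ⁅x, y⁆⁆] :=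
      LinearIndependent.pair_iff.2 h
    have hw₂ : ∀ i, ![⁅x, ⁅x, y⁆⁆, ⁅y, ⁅x, y⁆⁆] i ∈ lowerCentralSeries K L L 2 := by
      have hu := lie_mem_lowerCentralSeries_one (R := K) x y
      exact Fin.forall_fin_two.2
        ⟨lie_mem_lowerCentralSeries_succ x hu, lie_mem_lowerCentralSeries_succ y hu⟩
    refine absurd (((linearIndependent_vecCons_lie hxy h₁ hw hw₂).card_le_finrank_span
      ?_).trans (hdim x y ⁅x, y⁆)) (by simp)
    simp [Set.insert_subset_iff]
  obtain ⟨x', y', hsub, hyu⟩ := exists_subset_span_pair_lie_lie_eq_zero hαβ hdep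
  exact ⟨x', y', hxy.trans (sup_le_sup_right (span_le.2 hsub) _), hyu⟩

lemma lie_lie_lie_eq_zero_of_mem_pair {x y a : L} (hxy : ⊤ ≤ span K {x, y} ⊔ 𝒞 1)
    (h₁ : lowerCentralSeries K L L 1 ≠ ⊥) (hv : ⁅x, ⁅x, y⁆⁆ ∉ 𝒞 3)
    (hdim : ∀ X₁ X₂ X₃ : L, finrank K (span K
      ({X₁, X₂, X₃, ⁅X₁, X₂⁆, ⁅X₁, X₃⁆, ⁅X₂, X₃⁆} : Set L)) ≤ 4)
    (ha : a ∈ ({x, y} : Set L)) : ⁅a, ⁅x, ⁅x, y⁆⁆⁆ = 0 := by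
  by_contra hne
  have hv₂ := lie_mem_lowerCentralSeries_succ x (lie_mem_lowerCentralSeries_one (R := K) x y)
  have hw : LinearIndependent K ![⁅x, ⁅x, y⁆⁆, ⁅a, ⁅x, ⁅x, y⁆⁆⁆] :=
    linearIndependent_vecCons (linearIndependent_unique_iff.2 (by simpa using hne))
      (Fin.forall_fin_one.2 (lie_mem_lowerCentralSeries_succ a hv₂)) hv
  have hw₂ : ∀ i, ![⁅x, ⁅x, y⁆⁆, ⁅a, ⁅x, ⁅x, y⁆⁆⁆] i ∈ lowerCentralSeries K L L 2 :=
    Fin.forall_fin_two.2 ⟨hv₂, antitone_lowerCentralSeries K L L (Nat.le_succ 2)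
      (lie_mem_lowerCentralSeries_succ a hv₂)⟩
  refine absurd (((linearIndependent_vecCons_lie hxy h₁ hw hw₂).card_le_finrank_span
    ?_).trans (hdim x y ⁅x, ⁅x, y⁆⁆)) (by simp)
  rcases ha with rfl | rfl <;> simp [Set.insert_subset_iff]

end FiniteDimensional

theorem stmt_9_general (L : Type*) [LieRing L] [LieAlgebra ℝ L] [FiniteDimensional ℝ L]
    [LieRing.IsNilpotent L]
    (hder : 2 ≤ Module.finrank ℝ (⁅(⊤ : LieIdeal ℝ L), (⊤ : LieIdeal ℝ L)⁆ : LieIdeal ℝ L))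
    (hcodim : Module.finrank ℝ L ≤
      Module.finrank ℝ (⁅(⊤ : LieIdeal ℝ L), (⊤ : LieIdeal ℝ L)⁆ : LieIdeal ℝ L) + 2)
    (hdim : ∀ X₁ X₂ X₃ : L,
      Module.finrank ℝ (Submodule.span ℝ
        ({X₁, X₂, X₃, ⁅X₁, X₂⁆, ⁅X₁, X₃⁆, ⁅X₂, X₃⁆} : Set L)) ≤ 4) :
    ∃ b : Module.Basis (Fin 4) ℝ L,
      ⁅b 0, b 1⁆ = b 2 ∧ ⁅b 0, b 2⁆ = b 3 ∧ ⁅b 0, b 3⁆ = 0 ∧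
      ⁅b 1, b 2⁆ = 0 ∧ ⁅b 1, b 3⁆ = 0 ∧ ⁅b 2, b 3⁆ = 0 := by
  change 2 ≤ finrank ℝ (lowerCentralSeries ℝ L L 1).toSubmodule at hder
  have h₁ : lowerCentralSeries ℝ L L 1 ≠ ⊥ := by
    rintro h
    rw [h, LieSubmodule.bot_toSubmodule, finrank_bot] at hder
    omega
  obtain ⟨x₀, y₀, h₀⟩ := exists_top_le_span_pair_sup hcodim
  obtain ⟨x, y, hxy, hyu⟩ := exists_top_le_span_pair_sup_lie_lie_eq_zero h₀ h₁ hdim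
  have hv := lie_lie_notMem_lowerCentralSeries_three hxy hyu hder
  have hxv := lie_lie_lie_eq_zero_of_mem_pair hxy h₁ hv hdim (Set.mem_insert x {y})
  have hyv := lie_lie_lie_eq_zero_of_mem_pair hxy h₁ hv hdim (Set.mem_insert_of_mem x rfl)
  have h₃ := lowerCentralSeries_three_eq_bot hxy hyu hxv hyv
  have hv₂ := lie_mem_lowerCentralSeries_succ x (lie_mem_lowerCentralSeries_one (R := ℝ) x y)
  have huv := lie_mem_lowerCentralSeries_succ ⁅x, y⁆ hv₂
  rw [h₃, LieSubmodule.mem_bot] at huv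
  have hv₀ : ⁅x, ⁅x, y⁆⁆ ≠ 0 := fun h => hv (by rw [h]; exact zero_mem _)
  have hli : LinearIndependent ℝ ![x, y, ⁅x, y⁆, ⁅x, ⁅x, y⁆⁆] :=
    linearIndependent_vecCons_lie hxy h₁
      (linearIndependent_unique_iff.2 (by simpa using hv₀)) (Fin.forall_fin_one.2 hv₂)
  refine ⟨Basis.mk hli (top_le_span_range_of_lowerCentralSeries_three_eq_bot hxy hyu h₃), ?_⟩
  simp [hxv, hyu, hyv, huv]

/-- The four-dimensional filiform Lie algebra: basis `W, X, Y, Z` with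
`[W,X] = Y`, `[W,Y] = Z` and all other brackets zero. We express the
conclusion as the existence of such a basis. -/
theorem stmt_9 (L : Type*) [LieRing L] [LieAlgebra ℝ L] [FiniteDimensional ℝ L]
    [LieRing.IsNilpotent L]
    (hna : ∃ x y : L, ⁅x, y⁆ ≠ 0)
    (hder : 2 ≤ Module.finrank ℝ (⁅(⊤ : LieIdeal ℝ L), (⊤ : LieIdeal ℝ L)⁆ : LieIdeal ℝ L))
    (hcodim : Module.finrank ℝ L ≤
      Module.finrank ℝ (⁅(⊤ : LieIdeal ℝ L), (⊤ : LieIdeal ℝ L)⁆ : LieIdeal ℝ L) + 2)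
    (hdim : ∀ X₁ X₂ X₃ : L,
      Module.finrank ℝ (Submodule.span ℝ
        ({X₁, X₂, X₃, ⁅X₁, X₂⁆, ⁅X₁, X₃⁆, ⁅X₂, X₃⁆} : Set L)) ≤ 4) :
    ∃ b : Module.Basis (Fin 4) ℝ L,
      ⁅b 0, b 1⁆ = b 2 ∧ ⁅b 0, b 2⁆ = b 3 ∧ ⁅b 0, b 3⁆ = 0 ∧
      ⁅b 1, b 2⁆ = 0 ∧ ⁅b 1, b 3⁆ = 0 ∧ ⁅b 2, b 3⁆ = 0 :=
  stmt_9_general L hder hcodim hdim
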